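/- Let 1 ≤ q < 2, λ₊, λ₋ > 0 and μ > 0. If w : ℝ → ℝ is a C¹ function with w'' existing a.e. and satisfying -w'' = μ(λ₊(w⁺)^{q-1} - λ₋(w⁻)^{q-1}) on ℝ (in the weak sense), and w(0) = w'(0) = 0, then w ≡ 0 on ℝ. (One may show the Hamiltonian H(w,w') = (w')²/2 + μλ₊(w⁺)^q/q + μλ₋(w⁻)^q/q is constant along solutions and conclude.) -/

import Mathlib

/-!
For `q > 1` the nonlinearity is continuous and has the primitive
`F(s) = (λ₊ (s⁺)^q + λ₋ (s⁻)^q) / q`, so the Hamiltonian `w'²/2 + μ F(w)` is differentiable along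
a solution with derivative `w' w'' + μ F'(w) w' = 0`. It is therefore constant, equal to its value
`0` at the origin, and since `F` vanishes only at `0`, so does `w`.

For `q = 1` the right-hand side `w''` takes only the three values `-μλ₊, μλ₋, 0`; a derivative
has the intermediate value property (Darboux), so `w''` is constant, hence `0` as `w(0) = 0`,
and `w''(x) = 0` forces `w(x) = 0`.
-/

/-- The two-phase nonlinearity `λ₊ (s⁺)^{q-1} - λ₋ (s⁻)^{q-1}`, interpreted for `q = 1`
as `λ₊ χ_{s>0} - λ₋ χ_{s<0}`. -/
noncomputable def twoPhase (lp lm q s : ℝ) : ℝ :=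
  if 0 < s then lp * s ^ (q - 1)
  else if s < 0 then -(lm * (-s) ^ (q - 1))
  else 0

open Set

theorem eq_of_hasDerivAt_of_finite_range {f f' : ℝ → ℝ} (hf : ∀ x, HasDerivAt f (f' x) x)
    (hfin : (range f').Finite) (x y : ℝ) : f' x = f' y := by
  have hconn : (range f').OrdConnected := by
    simpa only [image_univ] using
      ordConnected_univ.image_hasDerivWithinAt fun x _ => (hf x).hasDerivWithinAt
  by_contra hne
  have hsub := hconn.uIcc_subset (mem_range_self x) (mem_range_self y)
  exact (Icc_infinite (min_lt_max.2 hne)).mono hsub hfin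

noncomputable def twoPhasePotential (lp lm q s : ℝ) : ℝ :=
  (lp * max s 0 ^ q + lm * max (-s) 0 ^ q) / q

section TwoPhase

variable {lp lm q s : ℝ}

@[simp]
theorem twoPhase_zero (lp lm q : ℝ) : twoPhase lp lm q 0 = 0 := by
  simp [twoPhase]

theorem twoPhase_neg (lp lm q s : ℝ) : twoPhase lm lp q (-s) = -twoPhase lp lm q s := by
  rcases lt_trichotomy s 0 with hs | rfl | hs
  · simp [twoPhase, hs, hs.not_gt]
  · simp
  · simp [twoPhase, hs, hs.not_gt]

theorem twoPhase_ne_zero (hlp : 0 < lp) (hlm : 0 < lm) (hs : s ≠ 0) :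
    twoPhase lp lm q s ≠ 0 := by
  rcases hs.lt_or_gt with hs | hs
  · simp [twoPhase, hs, hs.not_gt, hlm.ne', (Real.rpow_pos_of_pos (neg_pos.2 hs) _).ne']
  · simp [twoPhase, hs, hlp.ne', (Real.rpow_pos_of_pos hs _).ne']

theorem twoPhase_one_mem (lp lm s : ℝ) : twoPhase lp lm 1 s ∈ ({lp, -lm, 0} : Set ℝ) := by
  unfold twoPhase
  split_ifs <;> simp

theorem twoPhase_eq_of_ne_one (hq : q ≠ 1) :
    twoPhase lp lm q s = lp * max s 0 ^ (q - 1) - lm * max (-s) 0 ^ (q - 1) := by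
  have h0 : (0 : ℝ) ^ (q - 1) = 0 := Real.zero_rpow (sub_ne_zero.2 hq)
  rcases lt_trichotomy s 0 with hs | rfl | hs
  · simp [twoPhase, hs, hs.not_gt, hs.le, h0]
  · simp [h0]
  · simp [twoPhase, hs, hs.le, h0]

theorem continuous_twoPhase (hq : 1 < q) : Continuous (twoPhase lp lm q) := by
  rw [show twoPhase lp lm q = _ from funext fun s => twoPhase_eq_of_ne_one hq.ne']
  have : 0 ≤ q - 1 := sub_nonneg.2 hq.le
  fun_prop (disch := assumption)

theorem twoPhasePotential_neg (lp lm q s : ℝ) :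
    twoPhasePotential lm lp q (-s) = twoPhasePotential lp lm q s := by
  simp [twoPhasePotential, add_comm]

theorem twoPhasePotential_zero (hq : q ≠ 0) : twoPhasePotential lp lm q 0 = 0 := by
  simp [twoPhasePotential, Real.zero_rpow hq]

theorem twoPhasePotential_of_pos (hq : q ≠ 0) (hs : 0 < s) :
    twoPhasePotential lp lm q s = lp * s ^ q / q := by
  simp [twoPhasePotential, hs.le, Real.zero_rpow hq]

theorem twoPhasePotential_pos (hlp : 0 < lp) (hlm : 0 < lm) (hq : 0 < q) (hs : s ≠ 0) :
    0 < twoPhasePotential lp lm q s := by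
  rcases hs.lt_or_gt with hs | hs
  · rw [← twoPhasePotential_neg, twoPhasePotential_of_pos hq.ne' (neg_pos.2 hs)]
    have := Real.rpow_pos_of_pos (neg_pos.2 hs) q
    positivity
  · rw [twoPhasePotential_of_pos hq.ne' hs]
    have := Real.rpow_pos_of_pos hs q
    positivity

theorem continuous_twoPhasePotential (hq : 0 ≤ q) : Continuous (twoPhasePotential lp lm q) := by
  unfold twoPhasePotential
  fun_prop (disch := assumption)

theorem hasDerivAt_twoPhasePotential_of_pos (hq : q ≠ 0) (hs : 0 < s) :
    HasDerivAt (twoPhasePotential lp lm q) (twoPhase lp lm q s) s := by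
  have hpow : HasDerivAt (fun t => lp * t ^ q / q) (lp * (q * s ^ (q - 1)) / q) s :=
    ((Real.hasDerivAt_rpow_const (Or.inl hs.ne')).const_mul lp).div_const q
  have heq : (fun t => lp * t ^ q / q) =ᶠ[nhds s] twoPhasePotential lp lm q := by
    filter_upwards [Ioi_mem_nhds hs] with t ht
    exact (twoPhasePotential_of_pos hq ht).symm
  refine (hpow.congr_of_eventuallyEq heq.symm).congr_deriv ?_
  rw [twoPhase, if_pos hs]
  field_simp

theorem hasDerivAt_twoPhasePotential_of_ne (hq : q ≠ 0) (hs : s ≠ 0) :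
    HasDerivAt (twoPhasePotential lp lm q) (twoPhase lp lm q s) s := by
  rcases hs.lt_or_gt with hs | hs
  · have h := (hasDerivAt_twoPhasePotential_of_pos (lp := lm) (lm := lp) hq
      (neg_pos.2 hs)).comp s (hasDerivAt_neg s)
    rwa [twoPhase_neg, mul_neg_one, neg_neg,
      show twoPhasePotential lm lp q ∘ Neg.neg = twoPhasePotential lp lm q from
        funext fun t => twoPhasePotential_neg lp lm q t] at h
  · exact hasDerivAt_twoPhasePotential_of_pos hq hs

theorem hasDerivAt_twoPhasePotential (hq : 1 < q) (s : ℝ) :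
    HasDerivAt (twoPhasePotential lp lm q) (twoPhase lp lm q s) s :=
  hasDerivAt_of_hasDerivAt_of_ne'
    (fun t ht => hasDerivAt_twoPhasePotential_of_ne (by linarith) ht)
    (continuous_twoPhasePotential (by linarith)).continuousAt
    (continuous_twoPhase hq).continuousAt s

end TwoPhase

section Solution

variable {q lp lm μ : ℝ} {w w' : ℝ → ℝ}

theorem eq_zero_of_hasDerivAt_twoPhase_one (hlp : 0 < lp) (hlm : 0 < lm) (hμ : μ ≠ 0)
    (hw' : ∀ x, HasDerivAt w' (-(μ * twoPhase lp lm 1 (w x))) x) (h0 : w 0 = 0) (x : ℝ) :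
    w x = 0 := by
  have hfin : (range fun y => -(μ * twoPhase lp lm 1 (w y))).Finite :=
    ((toFinite {lp, -lm, 0}).image fun t => -(μ * t)).subset <|
      range_subset_iff.2 fun y => mem_image_of_mem _ (twoPhase_one_mem lp lm (w y))
  have hconst := eq_of_hasDerivAt_of_finite_range hw' hfin x 0
  rw [h0, twoPhase_zero, mul_zero, neg_zero, neg_eq_zero, mul_eq_zero] at hconst
  by_contra hx
  exact twoPhase_ne_zero hlp hlm hx (hconst.resolve_left hμ)

theorem hamiltonian_eq_of_hasDerivAt_twoPhase (hq : 1 < q) (hw : ∀ x, HasDerivAt w (w' x) x)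
    (hw' : ∀ x, HasDerivAt w' (-(μ * twoPhase lp lm q (w x))) x) (x y : ℝ) :
    w' x ^ 2 / 2 + μ * twoPhasePotential lp lm q (w x) =
      w' y ^ 2 / 2 + μ * twoPhasePotential lp lm q (w y) := by
  have hH : ∀ x, HasDerivAt (fun y => w' y ^ 2 / 2 + μ * twoPhasePotential lp lm q (w y)) 0 x := by
    intro x
    refine ((((hw' x).pow 2).div_const 2).add
      (((hasDerivAt_twoPhasePotential hq (w x)).comp x (hw x)).const_mul μ)).congr_deriv ?_
    push_cast
    ring
  exact is_const_of_deriv_eq_zero (fun y => (hH y).differentiableAt) (fun y => (hH y).deriv) x y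

theorem eq_zero_of_hasDerivAt_twoPhase_of_one_lt (hq : 1 < q) (hlp : 0 < lp) (hlm : 0 < lm)
    (hμ : 0 < μ) (hw : ∀ x, HasDerivAt w (w' x) x)
    (hw' : ∀ x, HasDerivAt w' (-(μ * twoPhase lp lm q (w x))) x) (h0 : w 0 = 0) (h0' : w' 0 = 0)
    (x : ℝ) : w x = 0 := by
  have hH := hamiltonian_eq_of_hasDerivAt_twoPhase hq hw hw' x 0
  have hq0 : 0 < q := zero_lt_one.trans hq
  rw [h0, h0', twoPhasePotential_zero hq0.ne'] at hH
  by_contra hx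
  have := mul_pos hμ (twoPhasePotential_pos hlp hlm hq0 hx)
  nlinarith [sq_nonneg (w' x)]

end Solution

theorem ode_unique_trivial (q lp lm μ : ℝ) (hq1 : 1 ≤ q)
    (hlp : 0 < lp) (hlm : 0 < lm) (hμ : 0 < μ)
    (w w' : ℝ → ℝ)
    (hw : ∀ x, HasDerivAt w (w' x) x)
    (hw' : ∀ x, HasDerivAt w' (-(μ * twoPhase lp lm q (w x))) x)
    (h0 : w 0 = 0) (h0' : w' 0 = 0) :
    ∀ x, w x = 0 := by
  rcases hq1.eq_or_lt with rfl | hq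
  · exact eq_zero_of_hasDerivAt_twoPhase_one hlp hlm hμ.ne' hw' h0
  · exact eq_zero_of_hasDerivAt_twoPhase_of_one_lt hq hlp hlm hμ hw hw' h0 h0'
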